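/- arXiv:2406.17390 — 3 statements merged into one kernel-verified Lean document; each statement's English description precedes it below -/
import Mathlib

section
/- A q-basic graph with an (ℓ_1, ℓ_2, ℓ_{31}, ℓ_{32}) configuration has exactly ℓ_1 + (3/2)ℓ_2 + 3ℓ_{31} + 2ℓ_{32} edges. -/
noncomputable section

open scoped Classical in
/-- The set of vertices of `G` contained in at least one triangle. -/
def triVerts {V : Type*} [Fintype V] (G : SimpleGraph V) : Finset V :=
  Finset.univ.filter fun v => ∃ u w, G.Adj v u ∧ G.Adj v w ∧ G.Adj u w

/-- `V_T(G)`: the number of vertices of `G` contained in at least one triangle. -/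
def VTg {V : Type*} [Fintype V] (G : SimpleGraph V) : ℕ := (triVerts G).card

/-- A graph `G` is `q`-basic if `V_T(G) = q` and removing any edge strictly decreases `V_T`. -/
def QBasic {V : Type*} [Fintype V] (G : SimpleGraph V) (q : ℕ) : Prop :=
  VTg G = q ∧ ∀ e ∈ G.edgeSet, VTg (G.deleteEdges {e}) < q

/-- The decomposition of (the triangle-vertices of) a `q`-basic graph described in
Lemma 2.5 of the paper: `V₁` carries a `K₃`-factor, `V₂` a matching whose matched pairs
have a common neighbour in `V₁`, and `V₃₁`, `V₃₂` consist of the remaining vertices,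
which are common neighbours of endpoints of edges of `W`, resp. of edges of `G[V₁]`
or edges between `V₁` and `V₂`. -/
def GoodDecomp {V : Type*} [Fintype V] [DecidableEq V] (G : SimpleGraph V)
    (V1 V2 V31 V32 : Finset V) : Prop :=
  -- (V1, V2, V31, V32) is a partition of the set of vertices lying in triangles
  (V1 ∪ V2 ∪ V31 ∪ V32 = triVerts G) ∧
  Disjoint V1 V2 ∧ Disjoint V1 V31 ∧ Disjoint V1 V32 ∧
  Disjoint V2 V31 ∧ Disjoint V2 V32 ∧ Disjoint V31 V32 ∧
  ∃ (T : Finset (Finset V)) (M : Finset (Finset V)) (c : Finset V → V),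
    -- (1) T is a K₃-factor of G[V₁] ...
    (∀ t ∈ T, t.card = 3 ∧ t ⊆ V1 ∧ ∀ u ∈ t, ∀ v ∈ t, u ≠ v → G.Adj u v) ∧
    (T : Set (Finset V)).PairwiseDisjoint id ∧ T.biUnion id = V1 ∧
    -- ... and there is no triangle outside V₁
    (¬ ∃ u v w : V, u ∉ V1 ∧ v ∉ V1 ∧ w ∉ V1 ∧ G.Adj u v ∧ G.Adj v w ∧ G.Adj u w) ∧
    -- (2) M is a perfect matching of G[V₂] ...
    (∀ m ∈ M, m.card = 2 ∧ m ⊆ V2 ∧ ∀ u ∈ m, ∀ v ∈ m, u ≠ v → G.Adj u v) ∧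
    (M : Set (Finset V)).PairwiseDisjoint id ∧ M.biUnion id = V2 ∧
    -- ... whose matched pairs have the common neighbour `c m ∈ V₁`
    (∀ m ∈ M, c m ∈ V1 ∧ ∀ u ∈ m, G.Adj u (c m)) ∧
    -- ... G[V₂] has no edges besides the matching edges
    (∀ u ∈ V2, ∀ v ∈ V2, G.Adj u v → ∃ m ∈ M, u ∈ m ∧ v ∈ m) ∧
    -- ... and the rest is an independent set
    (∀ u ∈ triVerts G, ∀ v ∈ triVerts G,
        u ∉ V1 → u ∉ V2 → v ∉ V1 → v ∉ V2 → ¬ G.Adj u v) ∧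
    -- W: edges inside V₁ not used by the K₃-factor, together with edges between V₁ and V₂
    -- other than those joining matched pairs of V₂ to their chosen common neighbour in V₁
    ∃ W : V → V → Prop,
      (W = fun x y =>
        (x ∈ V1 ∧ y ∈ V1 ∧ G.Adj x y ∧ ¬ ∃ t ∈ T, x ∈ t ∧ y ∈ t) ∨
        (x ∈ V1 ∧ y ∈ V2 ∧ G.Adj x y ∧ ¬ ∃ m ∈ M, y ∈ m ∧ c m = x)) ∧
      -- (31) every vertex of V₃₁ is a common neighbour of the endpoints of some edge of W,
      (∀ z ∈ V31, ∃ x y, W x y ∧ G.Adj x z ∧ G.Adj y z) ∧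
      -- and the endpoints of each edge of W have exactly one common neighbour in V₃₁
      (∀ x y, W x y → ∃! z, z ∈ V31 ∧ G.Adj x z ∧ G.Adj y z) ∧
      -- (32) every vertex of V₃₂ is a common neighbour of the endpoints of an edge of G[V₁]
      -- or of an edge between V₁ and V₂
      (∀ z ∈ V32, ∃ x y, G.Adj x y ∧ G.Adj x z ∧ G.Adj y z ∧
        ((x ∈ V1 ∧ y ∈ V1) ∨ (x ∈ V1 ∧ y ∈ V2)))

/-- `G` is `q`-basic and admits an `(ℓ₁, ℓ₂, ℓ₃₁, ℓ₃₂)` configuration. -/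
def HasConfig {V : Type*} [Fintype V] [DecidableEq V] (G : SimpleGraph V)
    (q l1 l2 l31 l32 : ℕ) : Prop :=
  QBasic G q ∧ ∃ V1 V2 V31 V32 : Finset V, GoodDecomp G V1 V2 V31 V32 ∧
    V1.card = l1 ∧ V2.card = l2 ∧ V31.card = l31 ∧ V32.card = l32

/-!
Every vertex of `V₃₁ ∪ V₃₂` has degree exactly two in a `q`-basic graph: it lies in a triangle,
its neighbours lie in `V₁ ∪ V₂`, and if it had a third neighbour `u` one could delete the edge
to `u` without destroying any triangle vertex, because all other triangle vertices lie in
triangles avoiding it. This accounts for `2 (ℓ₃₁ + ℓ₃₂)` edges. The edges inside `V₁ ∪ V₂` are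
partitioned into the edges of the `K₃`-factor (`ℓ₁` of them), the edges of the edge-disjoint
triangles formed by a matched pair of `V₂` and its apex in `V₁` (`3 ℓ₂ / 2`), and the edges of
`W`, which are in bijection with `V₃₁` (`ℓ₃₁`): a vertex of `V₃₁` determines the `W`-edge
joining its two neighbours.
-/

open Finset SimpleGraph

section TriangleVertices

variable {V : Type*} [Fintype V] {G : SimpleGraph V} {q : ℕ}

theorem mem_triVerts {v : V} :
    v ∈ triVerts G ↔ ∃ u w, G.Adj v u ∧ G.Adj v w ∧ G.Adj u w := by
  simp [triVerts]

theorem QBasic.not_triVerts_subset_deleteEdges (hG : QBasic G q) {a b : V}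
    (hab : G.Adj a b) : ¬ triVerts G ⊆ triVerts (G.deleteEdges {s(a, b)}) := fun h => by
  have hle := card_le_card h
  have hlt := hG.2 s(a, b) hab
  rw [← hG.1] at hlt
  exact absurd hle (not_le.2 hlt)

theorem QBasic.exists_common_adj (hG : QBasic G q) {a b : V} (hab : G.Adj a b) :
    ∃ w, G.Adj a w ∧ G.Adj b w := by
  by_contra! h
  -- then no triangle uses `s(a, b)`, so deleting it keeps every triangle vertex
  refine hG.not_triVerts_subset_deleteEdges hab fun v hv => ?_
  obtain ⟨u, w, hvu, hvw, huw⟩ := mem_triVerts.1 hv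
  simp only [mem_triVerts, deleteEdges_adj, Set.mem_singleton_iff]
  refine ⟨u, w, ⟨hvu, ?_⟩, ⟨hvw, ?_⟩, ⟨huw, ?_⟩⟩ <;> rw [Sym2.eq_iff] <;>
    grind [SimpleGraph.Adj.symm]

theorem QBasic.mem_triVerts_of_adj (hG : QBasic G q) {a b : V} (hab : G.Adj a b) :
    a ∈ triVerts G :=
  let ⟨w, haw, hbw⟩ := hG.exists_common_adj hab
  mem_triVerts.2 ⟨b, w, hab, haw, hbw⟩

theorem QBasic.eq_or_eq_of_adj (hG : QBasic G q) {z a b u : V}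
    (hza : G.Adj z a) (hzb : G.Adj z b) (hab : G.Adj a b)
    (havoid : ∀ v ∈ triVerts G, v ≠ z →
      ∃ p r, p ≠ z ∧ r ≠ z ∧ G.Adj v p ∧ G.Adj v r ∧ G.Adj p r)
    (hzu : G.Adj z u) : u = a ∨ u = b := by
  by_contra! hu
  -- deleting `s(z, u)` keeps the triangle `z a b` and every triangle avoiding `z`
  refine hG.not_triVerts_subset_deleteEdges hzu fun v hv => ?_
  simp only [mem_triVerts, deleteEdges_adj, Set.mem_singleton_iff, Sym2.eq_iff]
  by_cases hvz : v = z
  · subst hvz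
    exact ⟨a, b, ⟨hza, by grind⟩, ⟨hzb, by grind⟩, ⟨hab, by grind [hza.ne, hzb.ne]⟩⟩
  · obtain ⟨p, r, hp, hr, hvp, hvr, hpr⟩ := havoid v hv hvz
    exact ⟨p, r, ⟨hvp, by grind⟩, ⟨hvr, by grind⟩, ⟨hpr, by grind⟩⟩

theorem QBasic.degree_eq_two [DecidableRel G.Adj] (hG : QBasic G q) {R : Set V}
    (hR : G.IsIndepSet R)
    (hout : ∀ v ∈ triVerts G, v ∉ R → ∃ a b, a ∉ R ∧ b ∉ R ∧ G.Adj v a ∧ G.Adj v b ∧ G.Adj a b)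
    {z : V} (hzR : z ∈ R) (hz : z ∈ triVerts G) : G.degree z = 2 := by
  classical
  obtain ⟨a, b, hza, hzb, hab⟩ := mem_triVerts.1 hz
  have houtR : ∀ v ∈ triVerts G,
      ∃ p r, p ∉ R ∧ r ∉ R ∧ G.Adj v p ∧ G.Adj v r ∧ G.Adj p r := by
    intro v hv
    by_cases hvR : v ∈ R
    · obtain ⟨p, r, hvp, hvr, hpr⟩ := mem_triVerts.1 hv
      exact ⟨p, r, fun hp => hR hvR hp hvp.ne hvp, fun hr => hR hvR hr hvr.ne hvr, hvp, hvr, hpr⟩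
    · exact hout v hv hvR
  have havoid : ∀ v ∈ triVerts G, v ≠ z →
      ∃ p r, p ≠ z ∧ r ≠ z ∧ G.Adj v p ∧ G.Adj v r ∧ G.Adj p r := fun v hv _ =>
    let ⟨p, r, hp, hr, hvpr⟩ := houtR v hv
    ⟨p, r, fun h => hp (h ▸ hzR), fun h => hr (h ▸ hzR), hvpr⟩
  have hN : G.neighborFinset z = {a, b} := by
    ext u
    simp only [mem_neighborFinset, mem_insert, mem_singleton]
    exact ⟨hG.eq_or_eq_of_adj hza hzb hab havoid, by rintro (rfl | rfl) <;> assumption⟩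
  rw [← card_neighborFinset_eq_degree, hN, card_pair hab.ne]

end TriangleVertices

theorem Finset.card_filter_eq_add_add_of_forall {α : Type*} {s : Finset α}
    {P p q r : α → Prop} [DecidablePred P] [DecidablePred p] [DecidablePred q] [DecidablePred r]
    (hp : ∀ a ∈ s, p a → P a) (hq : ∀ a ∈ s, q a → P a) (hpq : ∀ a ∈ s, p a → ¬ q a)
    (hr : ∀ a ∈ s, P a ∧ ¬ p a ∧ ¬ q a ↔ r a) :
    #{a ∈ s | P a} = #{a ∈ s | p a} + #{a ∈ s | q a} + #{a ∈ s | r a} := by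
  have hP : {a ∈ {a ∈ s | P a} | p a} = {a ∈ s | p a} := by
    rw [filter_filter]
    exact filter_congr fun a ha => ⟨And.right, fun hpa => ⟨hp a ha hpa, hpa⟩⟩
  have hQ : {a ∈ {a ∈ {a ∈ s | P a} | ¬ p a} | q a} = {a ∈ s | q a} := by
    rw [filter_filter, filter_filter]
    exact filter_congr fun a ha =>
      ⟨fun h => h.2.2, fun hqa => ⟨hq a ha hqa, fun hpa => hpq a ha hpa hqa, hqa⟩⟩
  have hR : {a ∈ {a ∈ {a ∈ s | P a} | ¬ p a} | ¬ q a} = {a ∈ s | r a} := by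
    rw [filter_filter, filter_filter]
    exact filter_congr hr
  rw [← hP, ← hQ, ← hR, add_assoc, card_filter_add_card_filter_not,
    card_filter_add_card_filter_not]

theorem SimpleGraph.IsClique.exists_adj_adj_of_card_eq_three {V : Type*} [DecidableEq V]
    {G : SimpleGraph V} {t : Finset V}
    (ht : G.IsClique (t : Set V)) (h3 : #t = 3) {v : V} (hv : v ∈ t) :
    ∃ a b, a ∈ t ∧ b ∈ t ∧ G.Adj v a ∧ G.Adj v b ∧ G.Adj a b := by
  obtain ⟨a, b, hab, hvab⟩ :=
    card_eq_two.1 (show #(t.erase v) = 2 by rw [card_erase_of_mem hv, h3])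
  have ha : a ∈ t.erase v := by simp [hvab]
  have hb : b ∈ t.erase v := by simp [hvab]
  exact ⟨a, b, mem_of_mem_erase ha, mem_of_mem_erase hb,
    ht hv (mem_of_mem_erase ha) (ne_of_mem_erase ha).symm,
    ht hv (mem_of_mem_erase hb) (ne_of_mem_erase hb).symm,
    ht (mem_of_mem_erase ha) (mem_of_mem_erase hb) hab⟩

theorem Sym2.notMem_sym2_of_card_inter_le_one {α : Type*} [DecidableEq α] {s t : Finset α}
    {e : Sym2 α} (he : ¬ e.IsDiag) (hst : #(s ∩ t) ≤ 1) (hs : e ∈ s.sym2) : e ∉ t.sym2 := by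
  induction e using Sym2.ind with
  | _ x y =>
    rw [mk_mem_sym2_iff] at hs ⊢
    exact fun ht => he (Sym2.mk_isDiag_iff.2 <|
      card_le_one.1 hst x (mem_inter.2 ⟨hs.1, ht.1⟩) y (mem_inter.2 ⟨hs.2, ht.2⟩))

section EdgeCounting

variable {V : Type*} [Fintype V] [DecidableEq V] {G : SimpleGraph V} [DecidableRel G.Adj]

theorem SimpleGraph.IsClique.card_edgeFinset_inter_sym2 {s : Finset V}
    (hs : G.IsClique (s : Set V)) : #(G.edgeFinset ∩ s.sym2) = (#s).choose 2 := by
  rw [← Sym2.card_image_offDiag]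
  congr 1
  ext e
  induction e using Sym2.ind with
  | _ x y =>
    simp only [mem_inter, mem_edgeFinset, mem_edgeSet, mk_mem_sym2_iff, mem_image, mem_offDiag,
      Prod.exists, Function.uncurry_apply_pair, Sym2.eq_iff]
    constructor
    · rintro ⟨hxy, hx, hy⟩
      exact ⟨x, y, ⟨hx, hy, hxy.ne⟩, Or.inl ⟨rfl, rfl⟩⟩
    · rintro ⟨a, b, ⟨ha, hb, hab⟩, ⟨rfl, rfl⟩ | ⟨rfl, rfl⟩⟩
      · exact ⟨hs ha hb hab, ha, hb⟩
      · exact ⟨hs hb ha (Ne.symm hab), hb, ha⟩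

theorem card_edgeFinset_filter_exists_mem_sym2 {ι : Type*} {I : Finset ι} {f : ι → Finset V}
    (hf : ∀ i ∈ I, G.IsClique (f i : Set V))
    (hI : (I : Set ι).Pairwise fun i j => #(f i ∩ f j) ≤ 1) :
    #{e ∈ G.edgeFinset | ∃ i ∈ I, e ∈ (f i).sym2} = ∑ i ∈ I, (#(f i)).choose 2 := by
  have hunion : {e ∈ G.edgeFinset | ∃ i ∈ I, e ∈ (f i).sym2} =
      I.biUnion fun i => G.edgeFinset ∩ (f i).sym2 := by
    ext e
    simp only [mem_filter, mem_biUnion, mem_inter]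
    tauto
  rw [hunion, card_biUnion, sum_congr rfl fun i hi => (hf i hi).card_edgeFinset_inter_sym2]
  intro i hi j hj hij
  rw [Function.onFun, Finset.disjoint_left]
  intro e hei hej
  obtain ⟨he, hei⟩ := mem_inter.1 hei
  exact Sym2.notMem_sym2_of_card_inter_le_one (G.not_isDiag_of_mem_edgeFinset he)
    (hI hi hj hij) hei (mem_inter.1 hej).2

theorem card_edgeFinset_filter_exists_mem_sym2_of_triangle_factor {T : Finset (Finset V)}
    (hT : ∀ t ∈ T, #t = 3 ∧ G.IsClique (t : Set V))
    (hTdisj : (T : Set (Finset V)).PairwiseDisjoint id) :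
    #{e ∈ G.edgeFinset | ∃ t ∈ T, e ∈ t.sym2} = #(T.biUnion id) := by
  have hcount := card_edgeFinset_filter_exists_mem_sym2 (f := id) (fun t ht => (hT t ht).2)
    fun t ht t' ht' htt' => by
      simp [show t ∩ t' = ∅ from disjoint_iff_inter_eq_empty.1 (hTdisj ht ht' htt')]
  simp only [id] at hcount
  rw [card_biUnion hTdisj, hcount]
  exact sum_congr rfl fun t ht => by simp [(hT t ht).1]

theorem two_mul_card_edgeFinset_filter_exists_mem_sym2_insert {M : Finset (Finset V)}
    {c : Finset V → V} (hM : ∀ m ∈ M, #m = 2)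
    (hMdisj : (M : Set (Finset V)).PairwiseDisjoint id) (hc : ∀ m ∈ M, ∀ m' ∈ M, c m ∉ m')
    (hcl : ∀ m ∈ M, G.IsClique ((insert (c m) m : Finset V) : Set V)) :
    2 * #{e ∈ G.edgeFinset | ∃ m ∈ M, e ∈ (insert (c m) m).sym2} = 3 * #(M.biUnion id) := by
  have hinter : (M : Set (Finset V)).Pairwise fun m m' =>
      #(insert (c m) m ∩ insert (c m') m') ≤ 1 := by
    intro m hm m' hm' hmm'
    -- two such triangles can only share their apexes
    refine (card_le_card fun v hv => ?_).trans (card_singleton (c m)).le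
    have : v ∈ m → v ∉ m' := fun h => Finset.disjoint_left.1 (hMdisj hm hm' hmm') h
    have := hc m hm m' hm'
    have := hc m' hm' m hm
    simp only [mem_inter, mem_insert, mem_singleton] at hv this ⊢
    grind
  rw [card_edgeFinset_filter_exists_mem_sym2 hcl hinter,
    card_biUnion hMdisj, mul_sum, mul_sum]
  exact sum_congr rfl fun m hm => by
    rw [card_insert_of_notMem (hc m hm m hm), hM m hm, id, hM m hm]; rfl

open Classical in
theorem SimpleGraph.IsIndepSet.card_edgeFinset_filter_exists_mem {R : Finset V}
    (hR : G.IsIndepSet (R : Set V)) :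
    #{e ∈ G.edgeFinset | ∃ v ∈ e, v ∈ R} = ∑ v ∈ R, G.degree v := by
  have hunion :
      {e ∈ G.edgeFinset | ∃ v ∈ e, v ∈ R} = R.biUnion fun v => G.incidenceFinset v := by
    ext e
    simp only [mem_filter, mem_biUnion, mem_incidenceFinset, incidenceSet, mem_edgeFinset,
      Set.mem_ofPred_eq]
    tauto
  rw [hunion, card_biUnion, sum_congr rfl fun v _ => card_incidenceFinset_eq_degree G v]
  intro u hu v hv huv
  rw [Function.onFun, ← disjoint_coe, coe_incidenceFinset, coe_incidenceFinset,
    Set.disjoint_iff_inter_eq_empty]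
  exact G.incidenceSet_inter_incidenceSet_of_not_adj (hR hu hv huv) huv

theorem SimpleGraph.sym2_eq_of_adj_of_degree_le_two {z x y x' y' : V} (hz : G.degree z ≤ 2)
    (hx : G.Adj z x) (hy : G.Adj z y) (hxy : x ≠ y)
    (hx' : G.Adj z x') (hy' : G.Adj z y') (hxy' : x' ≠ y') : s(x', y') = s(x, y) := by
  have hN : G.neighborFinset z = {x, y} :=
    (eq_of_subset_of_card_le (by simp [insert_subset_iff, hx, hy])
      (by rw [card_neighborFinset_eq_degree, card_pair hxy]; exact hz)).symm
  have hmem : ∀ {u}, G.Adj z u → u = x ∨ u = y := fun hu => by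
    simpa [hN] using (G.mem_neighborFinset z _).2 hu
  rcases hmem hx' with rfl | rfl <;> rcases hmem hy' with rfl | rfl <;>
    simp_all [Sym2.eq_swap]

open Classical in
theorem card_edgeFinset_filter_exists_rel {R : Finset V} {W : V → V → Prop}
    (hWadj : ∀ x y, W x y → G.Adj x y)
    (hRW : ∀ z ∈ R, ∃ x y, W x y ∧ G.Adj x z ∧ G.Adj y z)
    (hWR : ∀ x y, W x y → ∃! z, z ∈ R ∧ G.Adj x z ∧ G.Adj y z)
    (hdeg : ∀ z ∈ R, G.degree z ≤ 2) :
    #{e ∈ G.edgeFinset | ∃ x y, W x y ∧ e = s(x, y)} = #R := by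
  choose fx fy hW hfx hfy using hRW
  refine (card_bij (fun z hz => s(fx z hz, fy z hz)) (fun z hz => ?_) (fun z hz z' hz' h => ?_)
    fun e he => ?_).symm
  · exact mem_filter.2 ⟨mem_edgeFinset.2 (hWadj _ _ (hW z hz)), _, _, hW z hz, rfl⟩
  · -- both `z` and `z'` are common neighbours of the same `W`-pair
    obtain ⟨w, -, hw⟩ := hWR _ _ (hW z hz)
    refine (hw z ⟨hz, hfx z hz, hfy z hz⟩).trans (hw z' ⟨hz', ?_⟩).symm
    rcases Sym2.eq_iff.1 h with ⟨h1, h2⟩ | ⟨h1, h2⟩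
    · exact ⟨h1 ▸ hfx z' hz', h2 ▸ hfy z' hz'⟩
    · exact ⟨h1 ▸ hfy z' hz', h2 ▸ hfx z' hz'⟩
  · obtain ⟨-, x, y, hxy, rfl⟩ := mem_filter.1 he
    obtain ⟨z, ⟨hz, hxz, hyz⟩, -⟩ := hWR x y hxy
    exact ⟨z, hz, SimpleGraph.sym2_eq_of_adj_of_degree_le_two (hdeg z hz) hxz.symm hyz.symm
      (hWadj x y hxy).ne (hfx z hz).symm (hfy z hz).symm (hWadj _ _ (hW z hz)).ne⟩

end EdgeCounting

section Configuration

variable {V : Type*} [DecidableEq V] {G : SimpleGraph V}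

theorem exists_rel_eq_iff_mem_sym2_of_mem_edgeSet {V1 V2 : Finset V} {T M : Finset (Finset V)}
    {c : Finset V → V} {W : V → V → Prop} (hT : ∀ t ∈ T, t ⊆ V1) (hM : ∀ m ∈ M, m ⊆ V2)
    (h12 : Disjoint V1 V2)
    (hMonly : ∀ u ∈ V2, ∀ v ∈ V2, G.Adj u v → ∃ m ∈ M, u ∈ m ∧ v ∈ m)
    (hW : W = fun x y =>
        (x ∈ V1 ∧ y ∈ V1 ∧ G.Adj x y ∧ ¬ ∃ t ∈ T, x ∈ t ∧ y ∈ t) ∨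
        (x ∈ V1 ∧ y ∈ V2 ∧ G.Adj x y ∧ ¬ ∃ m ∈ M, y ∈ m ∧ c m = x))
    {e : Sym2 V} (he : e ∈ G.edgeSet) :
    (∃ x y, W x y ∧ e = s(x, y)) ↔ e ∈ (V1 ∪ V2).sym2 ∧
      ¬ (∃ t ∈ T, e ∈ t.sym2) ∧ ¬ ∃ m ∈ M, e ∈ (insert (c m) m).sym2 := by
  subst hW
  induction e using Sym2.ind with
  | _ x y =>
    have h12' : ∀ v, v ∈ V1 → v ∉ V2 := fun _ hv => Finset.disjoint_left.1 h12 hv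
    have hT' : ∀ t ∈ T, ∀ v ∈ t, v ∈ V1 := fun t ht v hv => hT t ht hv
    have hM' : ∀ m ∈ M, ∀ v ∈ m, v ∈ V2 := fun m hm v hv => hM m hm hv
    have hxy : G.Adj x y := he
    have hne := hxy.ne
    simp only [mem_union, mem_insert, mk_mem_sym2_iff, Sym2.eq_iff]
    -- split on which of `V₁`, `V₂` contain `x` and `y`; an edge inside `V₂` is a matching edge
    grind [SimpleGraph.Adj.symm]

theorem GoodDecomp.triVerts_eq [Fintype V] {V1 V2 V31 V32 : Finset V}
    (hD : GoodDecomp G V1 V2 V31 V32) : triVerts G = (V1 ∪ V2) ∪ (V31 ∪ V32) := by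
  rw [← hD.1, union_assoc]

theorem GoodDecomp.disjoint [Fintype V] {V1 V2 V31 V32 : Finset V}
    (hD : GoodDecomp G V1 V2 V31 V32) : Disjoint (V1 ∪ V2) (V31 ∪ V32) := by
  obtain ⟨-, -, d131, d132, d231, d232, -⟩ := hD
  simp only [disjoint_union_left, disjoint_union_right]
  exact ⟨⟨d131, d231⟩, d132, d232⟩

theorem GoodDecomp.isIndepSet [Fintype V] {V1 V2 V31 V32 : Finset V}
    (hD : GoodDecomp G V1 V2 V31 V32) : G.IsIndepSet ((V31 ∪ V32 : Finset V) : Set V) := by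
  intro u hu v hv _ huv
  have hR : ∀ w ∈ V31 ∪ V32, w ∈ triVerts G ∧ w ∉ V1 ∧ w ∉ V2 := fun w hw =>
    ⟨hD.triVerts_eq ▸ mem_union_right _ hw,
      fun h => Finset.disjoint_left.1 hD.disjoint (mem_union_left _ h) hw,
      fun h => Finset.disjoint_left.1 hD.disjoint (mem_union_right _ h) hw⟩
  obtain ⟨-, -, -, -, -, -, -, -, -, -, -, -, -, -, -, -, -, -, -, hindep, -⟩ := hD
  exact hindep u (hR u hu).1 v (hR v hv).1 (hR u hu).2.1 (hR u hu).2.2 (hR v hv).2.1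
    (hR v hv).2.2 huv

theorem GoodDecomp.exists_adj_adj [Fintype V] {V1 V2 V31 V32 : Finset V}
    (hD : GoodDecomp G V1 V2 V31 V32) {v : V} (hv : v ∈ V1 ∪ V2) :
    ∃ a b, a ∈ V1 ∪ V2 ∧ b ∈ V1 ∪ V2 ∧ G.Adj v a ∧ G.Adj v b ∧ G.Adj a b := by
  obtain ⟨-, d12, -, -, -, -, -, T, M, c, hT, -, hTun, -, hM, -, hMun, hMc, -⟩ := hD
  rcases mem_union.1 hv with hv1 | hv2
  · obtain ⟨t, ht, hvt⟩ := mem_biUnion.1 (hTun ▸ hv1)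
    obtain ⟨h3, htV1, hcl⟩ := hT t ht
    obtain ⟨a, b, ha, hb, hab⟩ :=
      IsClique.exists_adj_adj_of_card_eq_three (fun u hu w hw => hcl u hu w hw) h3 hvt
    exact ⟨a, b, mem_union_left _ (htV1 ha), mem_union_left _ (htV1 hb), hab⟩
  · obtain ⟨m, hm, hvm⟩ := mem_biUnion.1 (hMun ▸ hv2)
    obtain ⟨h2, hmV2, hcl⟩ := hM m hm
    have hcm : c m ∉ m := fun h => Finset.disjoint_left.1 d12 (hMc m hm).1 (hmV2 h)
    have hcl' : G.IsClique ((insert (c m) m : Finset V) : Set V) := by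
      rw [coe_insert]
      exact IsClique.insert (fun u hu w hw => hcl u hu w hw) fun u hu _ => ((hMc m hm).2 u hu).symm
    obtain ⟨a, b, ha, hb, hab⟩ := hcl'.exists_adj_adj_of_card_eq_three
      (by rw [card_insert_of_notMem hcm, h2]) (mem_insert_of_mem hvm)
    have hsub : insert (c m) m ⊆ V1 ∪ V2 :=
      insert_subset (mem_union_left _ (hMc m hm).1) fun u hu => mem_union_right _ (hmV2 hu)
    exact ⟨a, b, hsub ha, hsub hb, hab⟩

variable [Fintype V] [DecidableRel G.Adj]

theorem QBasic.degree_eq_two_of_goodDecomp {q : ℕ} (hG : QBasic G q)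
    {V1 V2 V31 V32 : Finset V} (hD : GoodDecomp G V1 V2 V31 V32) {z : V}
    (hz : z ∈ V31 ∪ V32) : G.degree z = 2 := by
  refine hG.degree_eq_two hD.isIndepSet (fun v hv hvR => ?_) hz
    (hD.triVerts_eq ▸ mem_union_right _ hz)
  obtain ⟨a, b, ha, hb, hab⟩ :=
    hD.exists_adj_adj ((mem_union.1 (hD.triVerts_eq ▸ hv)).resolve_right hvR)
  exact ⟨a, b, Finset.disjoint_left.1 hD.disjoint ha, Finset.disjoint_left.1 hD.disjoint hb,
    hab⟩

theorem QBasic.card_edgeFinset_filter_notMem_sym2 {q : ℕ} (hG : QBasic G q)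
    {V1 V2 V31 V32 : Finset V} (hD : GoodDecomp G V1 V2 V31 V32) :
    #{e ∈ G.edgeFinset | e ∉ (V1 ∪ V2).sym2} = 2 * (#V31 + #V32) := by
  have hout : ∀ e ∈ G.edgeFinset, e ∉ (V1 ∪ V2).sym2 ↔ ∃ v ∈ e, v ∈ V31 ∪ V32 := by
    intro e he
    induction e using Sym2.ind with
    | _ x y =>
      have hxy := mem_edgeFinset.1 he
      have hx := hD.triVerts_eq ▸ hG.mem_triVerts_of_adj hxy
      have hy := hD.triVerts_eq ▸ hG.mem_triVerts_of_adj hxy.symm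
      have hxSR : x ∈ V1 ∪ V2 → x ∉ V31 ∪ V32 := fun h => Finset.disjoint_left.1 hD.disjoint h
      have hySR : y ∈ V1 ∪ V2 → y ∉ V31 ∪ V32 := fun h => Finset.disjoint_left.1 hD.disjoint h
      rw [mem_union] at hx hy
      simp only [Sym2.mem_iff, mk_mem_sym2_iff, exists_eq_or_imp, exists_eq_left]
      tauto
  obtain ⟨-, -, -, -, -, -, d3132, -⟩ := id hD
  rw [filter_congr hout, hD.isIndepSet.card_edgeFinset_filter_exists_mem,
    sum_congr rfl fun z hz => hG.degree_eq_two_of_goodDecomp hD hz, sum_const, smul_eq_mul,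
    mul_comm, card_union_of_disjoint d3132]

theorem two_mul_card_edgeFinset_filter_mem_sym2 {V1 V2 V31 : Finset V}
    {T M : Finset (Finset V)} {c : Finset V → V} {W : V → V → Prop}
    (hT : ∀ t ∈ T, #t = 3 ∧ t ⊆ V1 ∧ ∀ u ∈ t, ∀ v ∈ t, u ≠ v → G.Adj u v)
    (hTdisj : (T : Set (Finset V)).PairwiseDisjoint id) (hTun : T.biUnion id = V1)
    (hM : ∀ m ∈ M, #m = 2 ∧ m ⊆ V2 ∧ ∀ u ∈ m, ∀ v ∈ m, u ≠ v → G.Adj u v)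
    (hMdisj : (M : Set (Finset V)).PairwiseDisjoint id) (hMun : M.biUnion id = V2)
    (hMc : ∀ m ∈ M, c m ∈ V1 ∧ ∀ u ∈ m, G.Adj u (c m)) (h12 : Disjoint V1 V2)
    (hMonly : ∀ u ∈ V2, ∀ v ∈ V2, G.Adj u v → ∃ m ∈ M, u ∈ m ∧ v ∈ m)
    (hW : W = fun x y =>
        (x ∈ V1 ∧ y ∈ V1 ∧ G.Adj x y ∧ ¬ ∃ t ∈ T, x ∈ t ∧ y ∈ t) ∨
        (x ∈ V1 ∧ y ∈ V2 ∧ G.Adj x y ∧ ¬ ∃ m ∈ M, y ∈ m ∧ c m = x))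
    (hW31 : ∀ z ∈ V31, ∃ x y, W x y ∧ G.Adj x z ∧ G.Adj y z)
    (hWuniq : ∀ x y, W x y → ∃! z, z ∈ V31 ∧ G.Adj x z ∧ G.Adj y z)
    (hdeg : ∀ z ∈ V31, G.degree z ≤ 2) :
    2 * #{e ∈ G.edgeFinset | e ∈ (V1 ∪ V2).sym2} = 2 * #V1 + 3 * #V2 + 2 * #V31 := by
  classical
  have hc : ∀ m ∈ M, ∀ m' ∈ M, c m ∉ m' := fun m hm m' hm' h =>
    Finset.disjoint_left.1 h12 (hMc m hm).1 ((hM m' hm').2.1 h)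
  have hTcount : #{e ∈ G.edgeFinset | ∃ t ∈ T, e ∈ t.sym2} = #V1 :=
    hTun ▸ card_edgeFinset_filter_exists_mem_sym2_of_triangle_factor
      (fun t ht => ⟨(hT t ht).1, fun u hu v hv => (hT t ht).2.2 u hu v hv⟩) hTdisj
  have hMcount : 2 * #{e ∈ G.edgeFinset | ∃ m ∈ M, e ∈ (insert (c m) m).sym2} = 3 * #V2 :=
    hMun ▸ two_mul_card_edgeFinset_filter_exists_mem_sym2_insert (fun m hm => (hM m hm).1)
      hMdisj hc fun m hm => by
        rw [coe_insert]
        exact IsClique.insert (fun u hu v hv => (hM m hm).2.2 u hu v hv)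
          fun u hu _ => ((hMc m hm).2 u hu).symm
  have hWadj : ∀ x y, W x y → G.Adj x y := by
    rintro x y hxy
    rw [hW] at hxy
    rcases hxy with ⟨-, -, h, -⟩ | ⟨-, -, h, -⟩ <;> exact h
  have hWcount : #{e ∈ G.edgeFinset | ∃ x y, W x y ∧ e = s(x, y)} = #V31 :=
    card_edgeFinset_filter_exists_rel hWadj hW31 hWuniq hdeg
  have hTM : ∀ e ∈ G.edgeFinset, (∃ t ∈ T, e ∈ t.sym2) →
      ¬ ∃ m ∈ M, e ∈ (insert (c m) m).sym2 := by
    rintro e he ⟨t, ht, het⟩ ⟨m, hm, hem⟩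
    -- a triangle of the factor meets the triangle over `m` at most in the apex `c m`
    refine Sym2.notMem_sym2_of_card_inter_le_one (G.not_isDiag_of_mem_edgeFinset he)
      ((card_le_card fun v hv => ?_).trans (card_singleton (c m)).le) het hem
    obtain ⟨hvt, hvm⟩ := mem_inter.1 hv
    rcases mem_insert.1 hvm with hvc | hvm
    · exact mem_singleton.2 hvc
    · exact absurd ((hM m hm).2.1 hvm) (Finset.disjoint_left.1 h12 ((hT t ht).2.1 hvt))
  rw [card_filter_eq_add_add_of_forall (fun e _ ⟨t, ht, he⟩ =>
      sym2_mono ((hT t ht).2.1.trans subset_union_left) he)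
    (fun e _ ⟨m, hm, he⟩ => sym2_mono (insert_subset (mem_union_left _ (hMc m hm).1)
      fun u hu => mem_union_right _ ((hM m hm).2.1 hu)) he) hTM
    fun e he => (exists_rel_eq_iff_mem_sym2_of_mem_edgeSet (fun t ht => (hT t ht).2.1)
      (fun m hm => (hM m hm).2.1) h12 hMonly hW (mem_edgeFinset.1 he)).symm]
  omega

theorem QBasic.two_mul_card_edgeFinset {q : ℕ} (hG : QBasic G q) {V1 V2 V31 V32 : Finset V}
    (hD : GoodDecomp G V1 V2 V31 V32) :
    2 * #G.edgeFinset = 2 * #V1 + 3 * #V2 + 6 * #V31 + 4 * #V32 := by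
  obtain ⟨-, d12, -, -, -, -, -, T, M, c, hT, hTdisj, hTun, -, hM, hMdisj, hMun, hMc, hMonly, -,
    W, hW, hW31, hWuniq, -⟩ := id hD
  have hin := two_mul_card_edgeFinset_filter_mem_sym2 hT hTdisj hTun hM hMdisj hMun hMc d12
    hMonly hW hW31 hWuniq fun z hz => (hG.degree_eq_two_of_goodDecomp hD (mem_union_left _ hz)).le
  have hout := hG.card_edgeFinset_filter_notMem_sym2 hD
  rw [← card_filter_add_card_filter_not (s := G.edgeFinset) (· ∈ (V1 ∪ V2).sym2)]
  omega

end Configuration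

/-- a `q`-basic graph admitting an `(ℓ₁, ℓ₂, ℓ₃₁, ℓ₃₂)` configuration has
exactly `ℓ₁ + (3/2)ℓ₂ + 3ℓ₃₁ + 2ℓ₃₂` edges. -/
theorem stmt6 {V : Type*} [Fintype V] [DecidableEq V] (G : SimpleGraph V)
    (q l1 l2 l31 l32 : ℕ) (hG : HasConfig G q l1 l2 l31 l32) :
    (G.edgeSet.ncard : ℝ) = l1 + (3 / 2) * l2 + 3 * l31 + 2 * l32 := by
  classical
  obtain ⟨hq, V1, V2, V31, V32, hD, rfl, rfl, rfl, rfl⟩ := hG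
  have hcount : (2 * #G.edgeFinset : ℝ) = 2 * #V1 + 3 * #V2 + 6 * #V31 + 4 * #V32 := by
    exact_mod_cast hq.two_mul_card_edgeFinset hD
  rw [← coe_edgeFinset, Set.ncard_coe_finset]
  linarith

end
end

section
/- Let G = (V,E) be a q-basic graph and let V_1 ⊆ V be the vertex set of a maximal collection of pairwise vertex-disjoint triangles of G (so that G[V ∖ V_1] is triangle-free). Then the induced subgraph G[V ∖ V_1] contains no path with three edges, i.e., there are no vertices u_1, u_2, u_3, u_4 in V ∖ V_1 such that (u_1,u_2), (u_2,u_3), (u_3,u_4) are all edges of G. -/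
noncomputable section

/-- claim in the proof of Lemma 2.5: if `G` is `q`-basic and `V₁` is the
vertex set of a maximal collection of pairwise vertex-disjoint triangles of `G` (so that
`G[V ∖ V₁]` is triangle-free), then `G[V ∖ V₁]` contains no path with three edges. -/
theorem stmt7 {V : Type*} [Fintype V] [DecidableEq V] (G : SimpleGraph V) (q : ℕ)
    (hG : QBasic G q) (V1 : Finset V) (T : Finset (Finset V))
    (hT : ∀ t ∈ T, t.card = 3 ∧ ∀ u ∈ t, ∀ v ∈ t, u ≠ v → G.Adj u v)
    (hdisj : (T : Set (Finset V)).PairwiseDisjoint id)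
    (hV1 : T.biUnion id = V1)
    (hmax : ¬ ∃ u v w : V, u ∉ V1 ∧ v ∉ V1 ∧ w ∉ V1 ∧ G.Adj u v ∧ G.Adj v w ∧ G.Adj u w) :
    ¬ ∃ u1 u2 u3 u4 : V, u1 ∉ V1 ∧ u2 ∉ V1 ∧ u3 ∉ V1 ∧ u4 ∉ V1 ∧
      u1 ≠ u3 ∧ u1 ≠ u4 ∧ u2 ≠ u4 ∧
      G.Adj u1 u2 ∧ G.Adj u2 u3 ∧ G.Adj u3 u4 := by
  rintro ⟨u1, u2, u3, u4, h1, h2, h3, h4, h13, h14, h24, a12, a23, a34⟩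
  obtain ⟨hq, hdel⟩ := hG
  have hsub : ∀ t ∈ T, t ⊆ V1 := by
    intro t ht x hx
    rw [← hV1]
    exact Finset.mem_biUnion.mpr ⟨t, ht, hx⟩
  -- every edge of G lies in a triangle
  have key : ∀ a b : V, G.Adj a b → ∃ w, G.Adj a w ∧ G.Adj b w := by
    intro a b hab
    have hlt := hdel _ (G.mem_edgeSet.mpr hab)
    have hns : ¬ triVerts G ⊆ triVerts (G.deleteEdges {s(a,b)}) := by
      intro h
      have := Finset.card_le_card h
      unfold VTg at hq hlt
      omega
    obtain ⟨x, hxG, hxG'⟩ := Finset.not_subset.mp hns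
    simp only [triVerts, Finset.mem_filter, Finset.mem_univ, true_and] at hxG hxG'
    obtain ⟨u, w, hxu, hxw, huw⟩ := hxG
    have h : ¬ ((G.deleteEdges {s(a,b)}).Adj x u ∧ (G.deleteEdges {s(a,b)}).Adj x w ∧
        (G.deleteEdges {s(a,b)}).Adj u w) := fun hh => hxG' ⟨u, w, hh.1, hh.2.1, hh.2.2⟩
    simp only [SimpleGraph.deleteEdges_adj, Set.mem_singleton_iff] at h
    have hcase : s(x,u) = s(a,b) ∨ s(x,w) = s(a,b) ∨ s(u,w) = s(a,b) := by tauto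
    rcases hcase with hc | hc | hc
    · rcases Sym2.eq_iff.mp hc with ⟨rfl, rfl⟩ | ⟨rfl, rfl⟩
      · exact ⟨w, hxw, huw⟩
      · exact ⟨w, huw, hxw⟩
    · rcases Sym2.eq_iff.mp hc with ⟨rfl, rfl⟩ | ⟨rfl, rfl⟩
      · exact ⟨u, hxu, huw.symm⟩
      · exact ⟨u, huw.symm, hxu⟩
    · rcases Sym2.eq_iff.mp hc with ⟨rfl, rfl⟩ | ⟨rfl, rfl⟩
      · exact ⟨x, hxu.symm, hxw.symm⟩
      · exact ⟨x, hxw.symm, hxu.symm⟩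
  obtain ⟨w1, hw1a, hw1b⟩ := key u1 u2 a12
  have hw1V : w1 ∈ V1 := by
    by_contra h
    exact hmax ⟨u1, u2, w1, h1, h2, h, a12, hw1b, hw1a⟩
  obtain ⟨w3, hw3a, hw3b⟩ := key u3 u4 a34
  have hw3V : w3 ∈ V1 := by
    by_contra h
    exact hmax ⟨u3, u4, w3, h3, h4, h, a34, hw3b, hw3a⟩
  have hne23 := a23.ne
  -- delete the edge u2u3
  have hlt := hdel _ (G.mem_edgeSet.mpr a23)
  have hns : ¬ triVerts G ⊆ triVerts (G.deleteEdges {s(u2,u3)}) := by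
    intro h
    have := Finset.card_le_card h
    unfold VTg at hq hlt
    omega
  obtain ⟨x, hxG, hxG'⟩ := Finset.not_subset.mp hns
  simp only [triVerts, Finset.mem_filter, Finset.mem_univ, true_and] at hxG hxG'
  obtain ⟨u, w, hxu, hxw, huw⟩ := hxG
  have adj' : ∀ a b : V, G.Adj a b → ¬(a = u2 ∧ b = u3) → ¬(a = u3 ∧ b = u2) →
      (G.deleteEdges {s(u2,u3)}).Adj a b := by
    intro a b hab hA hB
    rw [SimpleGraph.deleteEdges_adj]
    refine ⟨hab, ?_⟩
    simp only [Set.mem_singleton_iff, Sym2.eq_iff]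
    tauto
  have hclass : x = u2 ∨ x = u3 ∨ (G.Adj x u2 ∧ G.Adj x u3) := by
    have h : ¬ ((G.deleteEdges {s(u2,u3)}).Adj x u ∧ (G.deleteEdges {s(u2,u3)}).Adj x w ∧
        (G.deleteEdges {s(u2,u3)}).Adj u w) := fun hh => hxG' ⟨u, w, hh.1, hh.2.1, hh.2.2⟩
    simp only [SimpleGraph.deleteEdges_adj, Set.mem_singleton_iff] at h
    have hcase : s(x,u) = s(u2,u3) ∨ s(x,w) = s(u2,u3) ∨ s(u,w) = s(u2,u3) := by tauto
    rcases hcase with hc | hc | hc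
    · rcases Sym2.eq_iff.mp hc with ⟨h', -⟩ | ⟨h', -⟩
      · exact Or.inl h'
      · exact Or.inr (Or.inl h')
    · rcases Sym2.eq_iff.mp hc with ⟨h', -⟩ | ⟨h', -⟩
      · exact Or.inl h'
      · exact Or.inr (Or.inl h')
    · rcases Sym2.eq_iff.mp hc with ⟨rfl, rfl⟩ | ⟨rfl, rfl⟩
      · exact Or.inr (Or.inr ⟨hxu, hxw⟩)
      · exact Or.inr (Or.inr ⟨hxw, hxu⟩)
  rcases hclass with rfl | rfl | ⟨hx2, hx3⟩
  · -- x = u2 : triangle u2, u1, w1 survives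
    refine hxG' ⟨u1, w1, ?_, ?_, ?_⟩
    · exact adj' _ u1 a12.symm (by rintro ⟨-, h⟩; exact h13 h) (by rintro ⟨h, -⟩; exact hne23 h)
    · exact adj' _ w1 hw1b (by rintro ⟨-, rfl⟩; exact h3 hw1V) (by rintro ⟨h, -⟩; exact hne23 h)
    · exact adj' u1 w1 hw1a (by rintro ⟨h, -⟩; exact a12.ne h) (by rintro ⟨h, -⟩; exact h13 h)
  · -- x = u3 : triangle u3, u4, w3 survives
    refine hxG' ⟨u4, w3, ?_, ?_, ?_⟩
    · exact adj' _ u4 a34 (by rintro ⟨h, -⟩; exact hne23 h.symm) (by rintro ⟨-, h⟩; exact h24 h.symm)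
    · exact adj' _ w3 hw3a (by rintro ⟨h, -⟩; exact hne23 h.symm) (by rintro ⟨-, rfl⟩; exact h2 hw3V)
    · exact adj' u4 w3 hw3b (by rintro ⟨h, -⟩; exact h24 h.symm) (by rintro ⟨h, -⟩; exact a34.ne h.symm)
  · -- x is a common neighbour of u2, u3, hence in V1, hence in a triangle of T
    have hxV1 : x ∈ V1 := by
      by_contra h
      exact hmax ⟨u2, u3, x, h2, h3, h, a23, hx3.symm, hx2.symm⟩
    have hxV1' := hxV1
    rw [← hV1] at hxV1'
    obtain ⟨t, htT, hxt⟩ := Finset.mem_biUnion.mp hxV1'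
    simp only [id] at hxt
    obtain ⟨hcard, hadj⟩ := hT t htT
    have h2' : (t.erase x).card = 2 := by rw [Finset.card_erase_of_mem hxt, hcard]
    obtain ⟨a, b, hab, habs⟩ := Finset.card_eq_two.mp h2'
    have ha' : a ∈ t.erase x := by rw [habs]; exact Finset.mem_insert_self a {b}
    have hb' : b ∈ t.erase x := by rw [habs]; simp
    have hax := Finset.ne_of_mem_erase ha'
    have hbx := Finset.ne_of_mem_erase hb'
    have hat := Finset.mem_of_mem_erase ha'
    have hbt := Finset.mem_of_mem_erase hb'
    have haV1 : a ∈ V1 := hsub t htT hat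
    have hbV1 : b ∈ V1 := hsub t htT hbt
    refine hxG' ⟨a, b, ?_, ?_, ?_⟩
    · exact adj' x a (hadj x hxt a hat hax.symm.symm.symm)
        (by rintro ⟨rfl, -⟩; exact h2 hxV1) (by rintro ⟨rfl, -⟩; exact h3 hxV1)
    · exact adj' x b (hadj x hxt b hbt hbx.symm.symm.symm)
        (by rintro ⟨rfl, -⟩; exact h2 hxV1) (by rintro ⟨rfl, -⟩; exact h3 hxV1)
    · exact adj' a b (hadj a hat b hbt hab)
        (by rintro ⟨rfl, -⟩; exact h2 haV1) (by rintro ⟨rfl, -⟩; exact h3 haV1)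

end
end

section
/- Fix real constants c_1, c_2, c_3 and define f(x_1,x_2,x_3) = (x_1/3) log x_1 + (x_2/2) log x_2 + x_3 log x_3 + c_1 x_1 + c_2 x_2 + c_3 x_3 for x_1, x_2, x_3 ≥ 0 (with the convention 0 log 0 = 0). Then, for all sufficiently large q, the minimum of f over {x_1 + x_2 + x_3 = q, x_i ≥ 0} is attained at a point with x_1 ≥ q − q^{9/10} and x_2, x_3 ≤ q^{9/10}. In particular, there exists C > 0 such that for all sufficiently large q, min_{x_1+x_2+x_3=q} f(x_1,x_2,x_3) ≥ (q/3) log q + c_1 q − C q^{9/10} log q. -/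
noncomputable section

open Real Filter

/-- The objective function of Lemma 2.7 (note `Real.log 0 = 0`, so the convention
`0 log 0 = 0` is automatic). -/
def varF (c1 c2 c3 x1 x2 x3 : ℝ) : ℝ :=
  x1 / 3 * Real.log x1 + x2 / 2 * Real.log x2 + x3 * Real.log x3 +
    c1 * x1 + c2 * x2 + c3 * x3

lemma mullog_le {u v : ℝ} (hu : 0 ≤ u) (huv : u ≤ v) (hv : 0 < v) :
    v * Real.log v - u * Real.log u ≤ (v - u) * (Real.log v + 1) := by
  rcases hu.eq_or_lt with h0 | h0
  · rw [← h0]; simp; nlinarith [hv.le]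
  · have hlog : Real.log (v / u) ≤ v / u - 1 := Real.log_le_sub_one_of_pos (by positivity)
    rw [Real.log_div hv.ne' h0.ne'] at hlog
    have h2 : u * (v / u - 1) = v - u := by field_simp
    have h3 : u * (Real.log v - Real.log u) ≤ v - u := by
      nlinarith [mul_le_mul_of_nonneg_left hlog h0.le]
    nlinarith [h3]

lemma mullog_ge {u v : ℝ} (hu : 0 < u) (huv : u ≤ v) :
    (v - u) * (Real.log u + 1) ≤ v * Real.log v - u * Real.log u := by
  have hv : 0 < v := lt_of_lt_of_le hu huv
  have hlog : Real.log (u / v) ≤ u / v - 1 := Real.log_le_sub_one_of_pos (by positivity)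
  rw [Real.log_div hu.ne' hv.ne'] at hlog
  have h2 : v * (u / v - 1) = u - v := by field_simp
  have h3 : v * (Real.log u - Real.log v) ≤ u - v := by
    nlinarith [mul_le_mul_of_nonneg_left hlog hv.le]
  nlinarith [h3]

lemma mullog_ge_sub_one {t : ℝ} (ht : 0 ≤ t) : t - 1 ≤ t * Real.log t := by
  rcases ht.eq_or_lt with h | h
  · simp [← h]
  · have := Real.one_sub_inv_le_log_of_pos h
    have h2 : t * (1 - t⁻¹) = t - 1 := by field_simp
    nlinarith [mul_le_mul_of_nonneg_left this h.le]

lemma varF_exists_min (c1 c2 c3 q : ℝ) (hq : 0 ≤ q) :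
    ∃ x1 x2 x3 : ℝ, 0 ≤ x1 ∧ 0 ≤ x2 ∧ 0 ≤ x3 ∧ x1 + x2 + x3 = q ∧
      ∀ y1 y2 y3 : ℝ, 0 ≤ y1 → 0 ≤ y2 → 0 ≤ y3 → y1 + y2 + y3 = q →
        varF c1 c2 c3 x1 x2 x3 ≤ varF c1 c2 c3 y1 y2 y3 := by
  set S : Set (ℝ × ℝ × ℝ) :=
    {p | 0 ≤ p.1 ∧ 0 ≤ p.2.1 ∧ 0 ≤ p.2.2 ∧ p.1 + p.2.1 + p.2.2 = q} with hS
  have hsub : S ⊆ Set.Icc 0 q ×ˢ Set.Icc 0 q ×ˢ Set.Icc 0 q := by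
    rintro ⟨a, b, c⟩ ⟨ha, hb, hc, habc⟩
    simp only [Set.mem_prod, Set.mem_Icc] at *
    refine ⟨⟨ha, by linarith⟩, ⟨hb, by linarith⟩, ⟨hc, by linarith⟩⟩
  have hclosed : IsClosed S := by
    have h1 : Continuous fun p : ℝ × ℝ × ℝ => p.1 := continuous_fst
    have h2 : Continuous fun p : ℝ × ℝ × ℝ => p.2.1 := continuous_fst.comp continuous_snd
    have h3 : Continuous fun p : ℝ × ℝ × ℝ => p.2.2 := continuous_snd.comp continuous_snd
    exact (isClosed_le continuous_const h1).inter
      ((isClosed_le continuous_const h2).inter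
        ((isClosed_le continuous_const h3).inter
          (isClosed_eq ((h1.add h2).add h3) continuous_const)))
  have hcpt : IsCompact S :=
    (isCompact_Icc.prod (isCompact_Icc.prod isCompact_Icc)).of_isClosed_subset hclosed hsub
  have hne : S.Nonempty := ⟨(q, 0, 0), by simp [hS, hq]⟩
  have hcont : Continuous fun p : ℝ × ℝ × ℝ => varF c1 c2 c3 p.1 p.2.1 p.2.2 := by
    have h1 : Continuous fun p : ℝ × ℝ × ℝ => p.1 := continuous_fst
    have h2 : Continuous fun p : ℝ × ℝ × ℝ => p.2.1 := continuous_fst.comp continuous_snd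
    have h3 : Continuous fun p : ℝ × ℝ × ℝ => p.2.2 := continuous_snd.comp continuous_snd
    have g1 : Continuous fun p : ℝ × ℝ × ℝ => p.1 * Real.log p.1 :=
      Real.continuous_mul_log.comp h1
    have g2 : Continuous fun p : ℝ × ℝ × ℝ => p.2.1 * Real.log p.2.1 :=
      Real.continuous_mul_log.comp h2
    have g3 : Continuous fun p : ℝ × ℝ × ℝ => p.2.2 * Real.log p.2.2 :=
      Real.continuous_mul_log.comp h3
    have : (fun p : ℝ × ℝ × ℝ => varF c1 c2 c3 p.1 p.2.1 p.2.2) =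
        fun p => (p.1 * Real.log p.1) / 3 + (p.2.1 * Real.log p.2.1) / 2 +
          p.2.2 * Real.log p.2.2 + c1 * p.1 + c2 * p.2.1 + c3 * p.2.2 := by
      funext p; simp only [varF]; ring
    rw [this]
    exact ((((((g1.div_const 3).add (g2.div_const 2)).add g3).add
      (continuous_const.mul h1)).add (continuous_const.mul h2)).add (continuous_const.mul h3))
  obtain ⟨⟨x1, x2, x3⟩, hxS, hmin⟩ := hcpt.exists_isMinOn hne hcont.continuousOn
  obtain ⟨h1, h2, h3, h4⟩ := hxS
  exact ⟨x1, x2, x3, h1, h2, h3, h4, fun y1 y2 y3 hy1 hy2 hy3 hy =>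
    hmin (show (y1, y2, y3) ∈ S from ⟨hy1, hy2, hy3, hy⟩)⟩

lemma move2 {c1 c2 c3 q x1 x2 x3 : ℝ} (hq : 1 ≤ q)
    (h1 : 0 ≤ x1) (h2 : 0 ≤ x2) (h3 : 0 ≤ x3) (hsum : x1 + x2 + x3 = q)
    (hmin : ∀ y1 y2 y3 : ℝ, 0 ≤ y1 → 0 ≤ y2 → 0 ≤ y3 → y1 + y2 + y3 = q →
        varF c1 c2 c3 x1 x2 x3 ≤ varF c1 c2 c3 y1 y2 y3)
    (hE : (Real.log q + 1) / 3 + c1 - c2 <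
      ((9 / 10) * Real.log q - Real.log 4 + 1) / 2) :
    x2 ≤ q ^ ((9 : ℝ) / 10) / 2 := by
  by_contra hcon
  push_neg at hcon
  have hq0 : (0 : ℝ) < q := by linarith
  have hr0 : (0 : ℝ) < q ^ ((9 : ℝ) / 10) := Real.rpow_pos_of_pos hq0 _
  obtain ⟨m, rfl⟩ : ∃ m, x2 = 2 * m := ⟨x2 / 2, by ring⟩
  have hm : 0 < m := by linarith
  have key := hmin (x1 + m) m x3 (by linarith) hm.le h3 (by linarith)
  have hA : (x1 + m) * Real.log (x1 + m) - x1 * Real.log x1 ≤ m * (Real.log q + 1) := by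
    have hle := mullog_le h1 (by linarith : x1 ≤ x1 + m) (by linarith)
    have hlog : Real.log (x1 + m) ≤ Real.log q :=
      Real.log_le_log (by linarith) (by linarith)
    nlinarith [hm.le]
  have hB : m * (Real.log m + 1) ≤ (2 * m) * Real.log (2 * m) - m * Real.log m := by
    have h := mullog_ge hm (by linarith : m ≤ 2 * m)
    have he : 2 * m - m = m := by ring
    rw [he] at h
    linarith
  have hlogm : (9 / 10) * Real.log q - Real.log 4 ≤ Real.log m := by
    have hr4 : q ^ ((9 : ℝ) / 10) / 4 ≤ m := by linarith
    have := Real.log_le_log (by positivity) hr4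
    rw [Real.log_div hr0.ne' (by norm_num), Real.log_rpow hq0] at this
    linarith
  have h5 : m * ((Real.log q + 1) / 3 - (Real.log m + 1) / 2 + (c1 - c2)) < 0 :=
    mul_neg_of_pos_of_neg hm (by linarith)
  simp only [varF] at key
  nlinarith [key, hA, hB, h5]

lemma move3 {c1 c2 c3 q x1 x2 x3 : ℝ} (hq : 1 ≤ q)
    (h1 : 0 ≤ x1) (h2 : 0 ≤ x2) (h3 : 0 ≤ x3) (hsum : x1 + x2 + x3 = q)
    (hmin : ∀ y1 y2 y3 : ℝ, 0 ≤ y1 → 0 ≤ y2 → 0 ≤ y3 → y1 + y2 + y3 = q →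
        varF c1 c2 c3 x1 x2 x3 ≤ varF c1 c2 c3 y1 y2 y3)
    (hE : (Real.log q + 1) / 3 + c1 - c3 <
      (9 / 10) * Real.log q - Real.log 4 + 1) :
    x3 ≤ q ^ ((9 : ℝ) / 10) / 2 := by
  by_contra hcon
  push_neg at hcon
  have hq0 : (0 : ℝ) < q := by linarith
  have hr0 : (0 : ℝ) < q ^ ((9 : ℝ) / 10) := Real.rpow_pos_of_pos hq0 _
  obtain ⟨m, rfl⟩ : ∃ m, x3 = 2 * m := ⟨x3 / 2, by ring⟩
  have hm : 0 < m := by linarith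
  have key := hmin (x1 + m) x2 m (by linarith) h2 hm.le (by linarith)
  have hA : (x1 + m) * Real.log (x1 + m) - x1 * Real.log x1 ≤ m * (Real.log q + 1) := by
    have hle := mullog_le h1 (by linarith : x1 ≤ x1 + m) (by linarith)
    have hlog : Real.log (x1 + m) ≤ Real.log q :=
      Real.log_le_log (by linarith) (by linarith)
    nlinarith [hm.le]
  have hB : m * (Real.log m + 1) ≤ (2 * m) * Real.log (2 * m) - m * Real.log m := by
    have h := mullog_ge hm (by linarith : m ≤ 2 * m)
    have he : 2 * m - m = m := by ring
    rw [he] at h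
    linarith
  have hlogm : (9 / 10) * Real.log q - Real.log 4 ≤ Real.log m := by
    have hr4 : q ^ ((9 : ℝ) / 10) / 4 ≤ m := by linarith
    have := Real.log_le_log (by positivity) hr4
    rw [Real.log_div hr0.ne' (by norm_num), Real.log_rpow hq0] at this
    linarith
  have h5 : m * ((Real.log q + 1) / 3 - (Real.log m + 1) + (c1 - c3)) < 0 :=
    mul_neg_of_pos_of_neg hm (by linarith)
  simp only [varF] at key
  nlinarith [key, hA, hB, h5]

/-- Lemma 2.7: for large `q`, the minimum of `f` over the simplex
`{x₁ + x₂ + x₃ = q, xᵢ ≥ 0}` is attained at a point with `x₁ ≥ q − q^{9/10}` and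
`x₂, x₃ ≤ q^{9/10}`; in particular there is `C > 0` such that for large `q` the minimum is
at least `(q/3) log q + c₁ q − C q^{9/10} log q`. -/
theorem stmt8 (c1 c2 c3 : ℝ) :
    (∀ᶠ q : ℝ in Filter.atTop, ∃ x1 x2 x3 : ℝ,
      0 ≤ x1 ∧ 0 ≤ x2 ∧ 0 ≤ x3 ∧ x1 + x2 + x3 = q ∧
      q - q ^ ((9 : ℝ) / 10) ≤ x1 ∧ x2 ≤ q ^ ((9 : ℝ) / 10) ∧ x3 ≤ q ^ ((9 : ℝ) / 10) ∧
      ∀ y1 y2 y3 : ℝ, 0 ≤ y1 → 0 ≤ y2 → 0 ≤ y3 → y1 + y2 + y3 = q →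
        varF c1 c2 c3 x1 x2 x3 ≤ varF c1 c2 c3 y1 y2 y3) ∧
    ∃ C : ℝ, 0 < C ∧ ∀ᶠ q : ℝ in Filter.atTop,
      ∀ y1 y2 y3 : ℝ, 0 ≤ y1 → 0 ≤ y2 → 0 ≤ y3 → y1 + y2 + y3 = q →
        q / 3 * Real.log q + c1 * q - C * q ^ ((9 : ℝ) / 10) * Real.log q ≤
          varF c1 c2 c3 y1 y2 y3 := by
  have hlog4 : (0 : ℝ) ≤ Real.log 4 := Real.log_nonneg (by norm_num)
  have habs1 := le_abs_self c1
  have habs2 := neg_abs_le c2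
  have habs3 := neg_abs_le c3
  have han1 := abs_nonneg c1
  have han2 := abs_nonneg c2
  have han3 := abs_nonneg c3
  have hE2 : ∀ᶠ q : ℝ in atTop, (Real.log q + 1) / 3 + c1 - c2 <
      ((9 / 10) * Real.log q - Real.log 4 + 1) / 2 := by
    filter_upwards [Real.tendsto_log_atTop.eventually_ge_atTop
      (60 * (Real.log 4 + |c1| + |c2| + |c3|) + 100)] with q h
    linarith
  have hE3 : ∀ᶠ q : ℝ in atTop, (Real.log q + 1) / 3 + c1 - c3 <
      (9 / 10) * Real.log q - Real.log 4 + 1 := by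
    filter_upwards [Real.tendsto_log_atTop.eventually_ge_atTop
      (60 * (Real.log 4 + |c1| + |c2| + |c3|) + 100)] with q h
    linarith
  have hpart1 : ∀ᶠ q : ℝ in Filter.atTop, ∃ x1 x2 x3 : ℝ,
      0 ≤ x1 ∧ 0 ≤ x2 ∧ 0 ≤ x3 ∧ x1 + x2 + x3 = q ∧
      q - q ^ ((9 : ℝ) / 10) ≤ x1 ∧ x2 ≤ q ^ ((9 : ℝ) / 10) ∧ x3 ≤ q ^ ((9 : ℝ) / 10) ∧
      ∀ y1 y2 y3 : ℝ, 0 ≤ y1 → 0 ≤ y2 → 0 ≤ y3 → y1 + y2 + y3 = q →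
        varF c1 c2 c3 x1 x2 x3 ≤ varF c1 c2 c3 y1 y2 y3 := by
    filter_upwards [eventually_ge_atTop (1 : ℝ), hE2, hE3] with q hq hq2 hq3
    obtain ⟨x1, x2, x3, h1, h2, h3, hsum, hmin⟩ := varF_exists_min c1 c2 c3 q (by linarith)
    have hx2 := move2 hq h1 h2 h3 hsum hmin hq2
    have hx3 := move3 hq h1 h2 h3 hsum hmin hq3
    have hr0 : (0 : ℝ) < q ^ ((9 : ℝ) / 10) := Real.rpow_pos_of_pos (by linarith) _
    exact ⟨x1, x2, x3, h1, h2, h3, hsum, by linarith, by linarith, by linarith, hmin⟩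
  refine ⟨hpart1, 3 + 2 * |c1| + |c2| + |c3|, by positivity, ?_⟩
  filter_upwards [hpart1, eventually_ge_atTop (1 : ℝ),
    Real.tendsto_log_atTop.eventually_ge_atTop 1] with q hq1 hq hlog
  obtain ⟨x1, x2, x3, h1, h2, h3, hsum, hx1, hx2, hx3, hmin⟩ := hq1
  intro y1 y2 y3 hy1 hy2 hy3 hysum
  refine le_trans ?_ (hmin y1 y2 y3 hy1 hy2 hy3 hysum)
  have hq0 : (0 : ℝ) < q := by linarith
  set r : ℝ := q ^ ((9 : ℝ) / 10) with hr_def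
  have hr1 : (1 : ℝ) ≤ r := by
    have := Real.rpow_le_rpow_of_exponent_le hq (show (0:ℝ) ≤ 9/10 by norm_num)
    rwa [Real.rpow_zero] at this
  have hr0 : (0 : ℝ) < r := by linarith
  have hA : q * Real.log q - x1 * Real.log x1 ≤ r * Real.log q + r := by
    have hle := mullog_le h1 (by linarith : x1 ≤ q) hq0
    have h2' : (q - x1) * (Real.log q + 1) ≤ r * (Real.log q + 1) :=
      mul_le_mul_of_nonneg_right (by linarith) (by linarith)
    nlinarith
  have hF2 : (-1 : ℝ) ≤ x2 * Real.log x2 := by linarith [mullog_ge_sub_one h2]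
  have hF3 : (-1 : ℝ) ≤ x3 * Real.log x3 := by linarith [mullog_ge_sub_one h3]
  have hx1' : c1 * x1 = c1 * q - c1 * (x2 + x3) := by rw [← hsum]; ring
  have hF4 : c1 * (x2 + x3) ≤ |c1| * (2 * r) :=
    le_trans (mul_le_mul_of_nonneg_right habs1 (by linarith))
      (mul_le_mul_of_nonneg_left (by linarith) (abs_nonneg c1))
  have hF5 : -(|c2| * r) ≤ c2 * x2 := by
    have t1 : -|c2| * x2 ≤ c2 * x2 := mul_le_mul_of_nonneg_right habs2 h2
    have t2 : |c2| * x2 ≤ |c2| * r := mul_le_mul_of_nonneg_left hx2 (abs_nonneg c2)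
    linarith
  have hF6 : -(|c3| * r) ≤ c3 * x3 := by
    have t1 : -|c3| * x3 ≤ c3 * x3 := mul_le_mul_of_nonneg_right habs3 h3
    have t2 : |c3| * x3 ≤ |c3| * r := mul_le_mul_of_nonneg_left hx3 (abs_nonneg c3)
    linarith
  have p4 : r ≤ r * Real.log q := by
    have := mul_le_mul_of_nonneg_left hlog hr0.le
    linarith
  have p5 : (1 : ℝ) ≤ r * Real.log q := by linarith
  have p1 : |c1| * r ≤ |c1| * (r * Real.log q) :=
    mul_le_mul_of_nonneg_left p4 (abs_nonneg c1)
  have p2 : |c2| * r ≤ |c2| * (r * Real.log q) :=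
    mul_le_mul_of_nonneg_left p4 (abs_nonneg c2)
  have p3 : |c3| * r ≤ |c3| * (r * Real.log q) :=
    mul_le_mul_of_nonneg_left p4 (abs_nonneg c3)
  simp only [varF]
  nlinarith [hA, hF2, hF3, hx1', hF4, hF5, hF6, p1, p2, p3, p4, p5]

end
end
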